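/- Let w : ℝ^p → ℝ be a smooth weight function, and for a smooth vector field f : ℝ^p → ℝ^p define the weighted Stein operator A^w_θ f := div(q_θ w f)/q_θ and the weighted Hyvärinen score H_w(x, θ) := (w(x)/2)‖∇_x log q_θ(x)‖² + div(w ∇_x log q_θ)(x). Then for every θ ∈ Θ, every j ∈ {1,…,d}, and every x ∈ ℝ^p, A^w_θ(∇_x ∂_{θ_j} log q_θ)(x) = ∂_{θ_j} H_w(x, θ); hence the SMoM estimating equations with the weighted Stein operator and test functions f_{θ,j} = ∇_x ∂_{θ_j} log q_θ coincide with the weighted score matching estimating equations. -/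

import Mathlib

open MeasureTheory Real Filter

/-- Partial derivative in the `i`-th coordinate. -/
noncomputable def pdv {n : ℕ} (i : Fin n) (f : (Fin n → ℝ) → ℝ) (x : Fin n → ℝ) : ℝ :=
  deriv (fun t => f (Function.update x i t)) (x i)

/-- Gradient of a scalar function on ℝ^n. -/
noncomputable def gradv {n : ℕ} (f : (Fin n → ℝ) → ℝ) (x : Fin n → ℝ) : Fin n → ℝ :=
  fun i => pdv i f x

/-- Divergence of a vector field on ℝ^n. -/
noncomputable def divv {n : ℕ} (f : (Fin n → ℝ) → (Fin n → ℝ)) (x : Fin n → ℝ) : ℝ :=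
  ∑ i, pdv i (fun y => f y i) x

/-- Divergence-based Stein operator `A_q f = div(q f) / q`. -/
noncomputable def stein {n : ℕ} (q : (Fin n → ℝ) → ℝ) (f : (Fin n → ℝ) → (Fin n → ℝ))
    (x : Fin n → ℝ) : ℝ :=
  divv (fun y i => q y * f y i) x / q x

/-- Gradient (in x) of the `j`-th Fisher score function `∂_{θ_j} log q_θ`. -/
noncomputable def scoreGrad {d p : ℕ} (q : (Fin d → ℝ) → (Fin p → ℝ) → ℝ)
    (θ : Fin d → ℝ) (j : Fin d) (x : Fin p → ℝ) : Fin p → ℝ :=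
  gradv (fun z => pdv j (fun θ' => Real.log (q θ' z)) θ) x

/-- Weighted divergence-based Stein operator `A^w_q f = div(q w f) / q`. -/
noncomputable def steinW {n : ℕ} (q w : (Fin n → ℝ) → ℝ) (f : (Fin n → ℝ) → (Fin n → ℝ))
    (x : Fin n → ℝ) : ℝ :=
  divv (fun y i => q y * w y * f y i) x / q x

/-- Weighted Hyvärinen score
`H_w(x,θ) = (w(x)/2) ‖∇ₓ log q_θ(x)‖² + div(w ∇ₓ log q_θ)(x)`. -/
noncomputable def hyvW {d p : ℕ} (q : (Fin d → ℝ) → (Fin p → ℝ) → ℝ)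
    (w : (Fin p → ℝ) → ℝ) (θ : Fin d → ℝ) (x : Fin p → ℝ) : ℝ :=
  (w x / 2) * ∑ i, (gradv (fun y => Real.log (q θ y)) x i) ^ 2
    + divv (fun y i => w y * gradv (fun z => Real.log (q θ z)) y i) x

section helpers

variable {A B : Type*} [NormedAddCommGroup A] [NormedSpace ℝ A]
  [NormedAddCommGroup B] [NormedSpace ℝ B]

theorem HasDerivAt.clm_apply_const {c : ℝ → (A →L[ℝ] B)} {c' : A →L[ℝ] B} {t : ℝ}
    (h : HasDerivAt c c' t) (a : A) : HasDerivAt (fun s => c s a) (c' a) t := by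
  simpa using h.clm_apply (hasDerivAt_const t a)

theorem hasFDerivAt_clm_apply_const {V : Type*} [NormedAddCommGroup V] [NormedSpace ℝ V]
    {f : V → (A →L[ℝ] B)} {f' : V →L[ℝ] (A →L[ℝ] B)} {pr : V}
    (h : HasFDerivAt f f' pr) (a : A) :
    HasFDerivAt (fun y => f y a) (f'.flip a) pr := by
  have := h.clm_apply (hasFDerivAt_const a pr)
  convert this using 1
  ext v
  simp

theorem slice1 {n : ℕ} (g : (Fin n → ℝ) → B) (hg : Differentiable ℝ g)
    (x : Fin n → ℝ) (i : Fin n) :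
    HasDerivAt (fun t => g (Function.update x i t)) (fderiv ℝ g x (Pi.single i 1)) (x i) := by
  have hc := hasDerivAt_update x i (x i)
  have hg' : HasFDerivAt g (fderiv ℝ g x) (Function.update x i (x i)) := by
    rw [Function.update_eq_self]; exact (hg x).hasFDerivAt
  exact hg'.comp_hasDerivAt _ hc

variable {d p : ℕ}

theorem slice_x (F : ((Fin d → ℝ) × (Fin p → ℝ)) → B) (hF : Differentiable ℝ F)
    (θ : Fin d → ℝ) (x : Fin p → ℝ) (i : Fin p) :
    HasDerivAt (fun t => F (θ, Function.update x i t))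
      (fderiv ℝ F (θ, x) (0, Pi.single i 1)) (x i) := by
  have hc : HasDerivAt (fun t => ((θ, Function.update x i t) : (Fin d → ℝ) × (Fin p → ℝ)))
      ((0, Pi.single i 1)) (x i) :=
    (hasDerivAt_const (x i) θ).prodMk (hasDerivAt_update x i (x i))
  have hF' : HasFDerivAt F (fderiv ℝ F (θ, x)) (θ, Function.update x i (x i)) := by
    rw [Function.update_eq_self]; exact (hF _).hasFDerivAt
  exact hF'.comp_hasDerivAt _ hc

theorem slice_th (F : ((Fin d → ℝ) × (Fin p → ℝ)) → B) (hF : Differentiable ℝ F)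
    (θ : Fin d → ℝ) (x : Fin p → ℝ) (j : Fin d) :
    HasDerivAt (fun t => F (Function.update θ j t, x))
      (fderiv ℝ F (θ, x) (Pi.single j 1, 0)) (θ j) := by
  have hc : HasDerivAt (fun t => ((Function.update θ j t, x) : (Fin d → ℝ) × (Fin p → ℝ)))
      ((Pi.single j 1, 0)) (θ j) :=
    (hasDerivAt_update θ j (θ j)).prodMk (hasDerivAt_const (θ j) x)
  have hF' : HasFDerivAt F (fderiv ℝ F (θ, x)) (Function.update θ j (θ j), x) := by
    rw [Function.update_eq_self]; exact (hF _).hasFDerivAt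
  exact hF'.comp_hasDerivAt _ hc

end helpers

set_option maxHeartbeats 2000000 in
theorem aux_main {d p : ℕ}
    (q : (Fin d → ℝ) → (Fin p → ℝ) → ℝ)
    (hpos : ∀ θ x, 0 < q θ x)
    (hsmooth : ContDiff ℝ (⊤ : ℕ∞) (fun pr : (Fin d → ℝ) × (Fin p → ℝ) => q pr.1 pr.2))
    (w : (Fin p → ℝ) → ℝ) (hw : ContDiff ℝ (⊤ : ℕ∞) w)
    (θ : Fin d → ℝ) (j : Fin d) (x : Fin p → ℝ) :
    steinW (q θ) w (scoreGrad q θ j) x = pdv j (fun θ' => hyvW q w θ' x) θ := by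
  classical
  -- basic objects
  have hL : ContDiff ℝ (⊤ : ℕ∞) (fun pr : (Fin d → ℝ) × (Fin p → ℝ) => Real.log (q pr.1 pr.2)) :=
    hsmooth.log fun pr => (hpos pr.1 pr.2).ne'
  set L : ((Fin d → ℝ) × (Fin p → ℝ)) → ℝ := fun pr => Real.log (q pr.1 pr.2) with hLdef
  have hD1 : ContDiff ℝ (⊤ : ℕ∞) (fderiv ℝ L) := hL.fderiv_right (by simp)
  have hD2 : ContDiff ℝ (⊤ : ℕ∞) (fderiv ℝ (fderiv ℝ L)) := hD1.fderiv_right (by simp)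
  have hLd : Differentiable ℝ L := hL.differentiable (by simp)
  have hD1d : Differentiable ℝ (fderiv ℝ L) := hD1.differentiable (by simp)
  have hD2d : Differentiable ℝ (fderiv ℝ (fderiv ℝ L)) := hD2.differentiable (by simp)
  have hQd : Differentiable ℝ (fun pr : (Fin d → ℝ) × (Fin p → ℝ) => q pr.1 pr.2) :=
    hsmooth.differentiable (by simp)
  have hwd : Differentiable ℝ w := hw.differentiable (by simp)
  set D1 := fderiv ℝ L with hD1def
  set D2 := fderiv ℝ D1 with hD2def
  set D3 := fderiv ℝ D2 with hD3def
  -- symmetry of second derivative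
  have symm2 : ∀ (pr : (Fin d → ℝ) × (Fin p → ℝ)) a b, D2 pr a b = D2 pr b a := by
    intro pr a b
    exact hL.contDiffAt.isSymmSndFDerivAt (by rw [minSmoothness_of_isRCLikeNormedField]; exact WithTop.coe_le_coe.mpr le_top) a b
  -- symmetry of third derivative in first two slots
  have symm3a : ∀ (pr : (Fin d → ℝ) × (Fin p → ℝ)) a b c, D3 pr a b c = D3 pr b a c := by
    intro pr a b c
    have h := hD1.contDiffAt.isSymmSndFDerivAt (x := pr) (by rw [minSmoothness_of_isRCLikeNormedField]; exact WithTop.coe_le_coe.mpr le_top) a b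
    exact DFunLike.congr_fun h c
  -- third derivative as derivative of evaluated second derivative
  have key : ∀ (pr : (Fin d → ℝ) × (Fin p → ℝ)) (b c : (Fin d → ℝ) × (Fin p → ℝ)),
      fderiv ℝ (fun pr' => D2 pr' b c) pr = ((D3 pr).flip b).flip c := fun pr b c =>
    (hasFDerivAt_clm_apply_const (hasFDerivAt_clm_apply_const ((hD2d pr).hasFDerivAt) b) c).fderiv
  -- symmetry of third derivative in last two slots
  have symm3b : ∀ (pr : (Fin d → ℝ) × (Fin p → ℝ)) a b c, D3 pr a b c = D3 pr a c b := by
    intro pr a b c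
    have hfun : (fun pr' => D2 pr' b c) = (fun pr' => D2 pr' c b) :=
      funext fun pr' => symm2 pr' b c
    have h := key pr b c
    rw [hfun, key pr c b] at h
    have h2 := DFunLike.congr_fun h a
    simpa [ContinuousLinearMap.flip_apply] using h2.symm
  -- log-derivative relation
  have hQD1 : ∀ (pr : (Fin d → ℝ) × (Fin p → ℝ)) v,
      fderiv ℝ (fun pr' : (Fin d → ℝ) × (Fin p → ℝ) => q pr'.1 pr'.2) pr v
        = q pr.1 pr.2 * D1 pr v := by
    intro pr v
    have h : HasFDerivAt L
        ((q pr.1 pr.2)⁻¹ • fderiv ℝ (fun pr' : (Fin d → ℝ) × (Fin p → ℝ) => q pr'.1 pr'.2) pr) pr :=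
      ((hQd pr).hasFDerivAt).log (hpos _ _).ne'
    have h2 : D1 pr
        = (q pr.1 pr.2)⁻¹ • fderiv ℝ (fun pr' : (Fin d → ℝ) × (Fin p → ℝ) => q pr'.1 pr'.2) pr :=
      h.fderiv
    rw [h2]
    simp only [ContinuousLinearMap.smul_apply, smul_eq_mul]
    rw [← mul_assoc, mul_inv_cancel₀ (hpos pr.1 pr.2).ne', one_mul]
  -- notation
  have hqx := hpos θ x
  -- the score gradient in terms of D2
  have hsg : ∀ (y : Fin p → ℝ) (i : Fin p),
      scoreGrad q θ j y i = D2 (θ, y) (0, Pi.single i 1) (Pi.single j 1, 0) := by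
    intro y i
    have hinner : (fun z => pdv j (fun θ' => Real.log (q θ' z)) θ)
        = fun z => D1 (θ, z) (Pi.single j 1, 0) := by
      funext z
      exact (slice_th L hLd θ z j).deriv
    show pdv i (fun z => pdv j (fun θ' => Real.log (q θ' z)) θ) y = _
    rw [hinner]
    exact ((slice_x D1 hD1d θ y i).clm_apply_const (Pi.single j 1, 0)).deriv
  -- LHS computation
  have hLHS : steinW (q θ) w (scoreGrad q θ j) x
      = ∑ i, (D1 (θ, x) (0, Pi.single i 1) * w x
            * D2 (θ, x) (0, Pi.single i 1) (Pi.single j 1, 0)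
          + fderiv ℝ w x (Pi.single i 1) * D2 (θ, x) (0, Pi.single i 1) (Pi.single j 1, 0)
          + w x * D3 (θ, x) (0, Pi.single i 1) (0, Pi.single i 1) (Pi.single j 1, 0)) := by
    have hterm : ∀ i : Fin p,
        pdv i (fun y => q θ y * w y * scoreGrad q θ j y i) x
          = (q θ x * D1 (θ, x) (0, Pi.single i 1) * w x
              + q θ x * fderiv ℝ w x (Pi.single i 1))
              * D2 (θ, x) (0, Pi.single i 1) (Pi.single j 1, 0)
            + q θ x * w x * D3 (θ, x) (0, Pi.single i 1) (0, Pi.single i 1) (Pi.single j 1, 0) := by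
      intro i
      have hq_i : HasDerivAt (fun t => q θ (Function.update x i t))
          (q θ x * D1 (θ, x) (0, Pi.single i 1)) (x i) := by
        have := slice_x (fun pr : (Fin d → ℝ) × (Fin p → ℝ) => q pr.1 pr.2) hQd θ x i
        rwa [hQD1] at this
      have hw_i : HasDerivAt (fun t => w (Function.update x i t))
          (fderiv ℝ w x (Pi.single i 1)) (x i) := slice1 w hwd x i
      have hf_i : HasDerivAt (fun t => scoreGrad q θ j (Function.update x i t) i)
          (D3 (θ, x) (0, Pi.single i 1) (0, Pi.single i 1) (Pi.single j 1, 0)) (x i) := by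
        have heq : (fun t => scoreGrad q θ j (Function.update x i t) i)
            = fun t => D2 (θ, Function.update x i t) (0, Pi.single i 1) (Pi.single j 1, 0) :=
          funext fun t => hsg _ i
        rw [heq]
        exact (((slice_x D2 hD2d θ x i).clm_apply_const (0, Pi.single i 1)).clm_apply_const
          (Pi.single j 1, 0))
      have h := ((hq_i.fun_mul hw_i).fun_mul hf_i).deriv
      show deriv (fun t => q θ (Function.update x i t) * w (Function.update x i t)
          * scoreGrad q θ j (Function.update x i t) i) (x i) = _
      rw [h]
      simp only [Function.update_eq_self]
      rw [hsg x i]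
    show divv (fun y i => q θ y * w y * scoreGrad q θ j y i) x / q θ x = _
    unfold divv
    rw [Finset.sum_congr rfl fun i _ => hterm i, Finset.sum_div]
    refine Finset.sum_congr rfl fun i _ => ?_
    rw [div_eq_iff hqx.ne']
    ring
  -- RHS : rewrite hyvW in canonical form for every θ'
  have hhyv : ∀ θ' : Fin d → ℝ, hyvW q w θ' x
      = (w x / 2) * ∑ i, (D1 (θ', x) (0, Pi.single i 1)) ^ 2
        + ∑ i, (fderiv ℝ w x (Pi.single i 1) * D1 (θ', x) (0, Pi.single i 1)
            + w x * D2 (θ', x) (0, Pi.single i 1) (0, Pi.single i 1)) := by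
    intro θ'
    have hgrad : ∀ (y : Fin p → ℝ) (i : Fin p),
        gradv (fun z => Real.log (q θ' z)) y i = D1 (θ', y) (0, Pi.single i 1) := by
      intro y i
      exact (slice_x L hLd θ' y i).deriv
    unfold hyvW divv
    congr 1
    · congr 1
      exact Finset.sum_congr rfl fun i _ => by rw [hgrad x i]
    · refine Finset.sum_congr rfl fun i _ => ?_
      have heq : (fun y => w y * gradv (fun z => Real.log (q θ' z)) y i)
          = fun y => w y * D1 (θ', y) (0, Pi.single i 1) :=
        funext fun y => by rw [hgrad y i]
      rw [heq]
      have hw_i : HasDerivAt (fun t => w (Function.update x i t))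
          (fderiv ℝ w x (Pi.single i 1)) (x i) := slice1 w hwd x i
      have hg_i : HasDerivAt (fun t => D1 (θ', Function.update x i t) (0, Pi.single i 1))
          (D2 (θ', x) (0, Pi.single i 1) (0, Pi.single i 1)) (x i) :=
        (slice_x D1 hD1d θ' x i).clm_apply_const (0, Pi.single i 1)
      have h := (hw_i.fun_mul hg_i).deriv
      show deriv (fun t => w (Function.update x i t)
          * D1 (θ', Function.update x i t) (0, Pi.single i 1)) (x i) = _
      rw [h]
      simp only [Function.update_eq_self]
  -- RHS differentiation in θ
  have hRHS : pdv j (fun θ' => hyvW q w θ' x) θ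
      = (w x / 2) * ∑ i, (2 * D1 (θ, x) (0, Pi.single i 1)
            * D2 (θ, x) (Pi.single j 1, 0) (0, Pi.single i 1))
        + ∑ i, (fderiv ℝ w x (Pi.single i 1) * D2 (θ, x) (Pi.single j 1, 0) (0, Pi.single i 1)
            + w x * D3 (θ, x) (Pi.single j 1, 0) (0, Pi.single i 1) (0, Pi.single i 1)) := by
    have heq : (fun θ' => hyvW q w θ' x)
        = fun θ' => (w x / 2) * ∑ i, (D1 (θ', x) (0, Pi.single i 1)) ^ 2
            + ∑ i, (fderiv ℝ w x (Pi.single i 1) * D1 (θ', x) (0, Pi.single i 1)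
              + w x * D2 (θ', x) (0, Pi.single i 1) (0, Pi.single i 1)) :=
      funext hhyv
    show pdv j _ θ = _
    rw [heq]
    have hA : ∀ i : Fin p, HasDerivAt
        (fun t => D1 (Function.update θ j t, x) (0, Pi.single i 1))
        (D2 (θ, x) (Pi.single j 1, 0) (0, Pi.single i 1)) (θ j) :=
      fun i => (slice_th D1 hD1d θ x j).clm_apply_const (0, Pi.single i 1)
    have hB : ∀ i : Fin p, HasDerivAt
        (fun t => D2 (Function.update θ j t, x) (0, Pi.single i 1) (0, Pi.single i 1))
        (D3 (θ, x) (Pi.single j 1, 0) (0, Pi.single i 1) (0, Pi.single i 1)) (θ j) :=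
      fun i => ((slice_th D2 hD2d θ x j).clm_apply_const (0, Pi.single i 1)).clm_apply_const
        (0, Pi.single i 1)
    have h1 : HasDerivAt (fun t => ∑ i, (D1 (Function.update θ j t, x) (0, Pi.single i 1)) ^ 2)
        (∑ i, 2 * D1 (θ, x) (0, Pi.single i 1)
          * D2 (θ, x) (Pi.single j 1, 0) (0, Pi.single i 1)) (θ j) := by
      refine HasDerivAt.fun_sum fun i _ => ?_
      have := (hA i).fun_pow 2
      simpa [Function.update_eq_self, mul_comm, mul_assoc, mul_left_comm] using this
    have h2 : HasDerivAt (fun t => ∑ i,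
          (fderiv ℝ w x (Pi.single i 1) * D1 (Function.update θ j t, x) (0, Pi.single i 1)
            + w x * D2 (Function.update θ j t, x) (0, Pi.single i 1) (0, Pi.single i 1)))
        (∑ i, (fderiv ℝ w x (Pi.single i 1) * D2 (θ, x) (Pi.single j 1, 0) (0, Pi.single i 1)
            + w x * D3 (θ, x) (Pi.single j 1, 0) (0, Pi.single i 1) (0, Pi.single i 1))) (θ j) := by
      refine HasDerivAt.fun_sum fun i _ => ?_
      exact ((hA i).const_mul _).add ((hB i).const_mul _)
    exact ((h1.const_mul (w x / 2)).add h2).deriv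
  -- put things together
  rw [hLHS, hRHS]
  have e2 : ∀ i : Fin p, D2 (θ, x) (Pi.single j 1, 0) (0, Pi.single i 1)
      = D2 (θ, x) (0, Pi.single i 1) (Pi.single j 1, 0) := fun i => symm2 _ _ _
  have e3 : ∀ i : Fin p, D3 (θ, x) (Pi.single j 1, 0) (0, Pi.single i 1) (0, Pi.single i 1)
      = D3 (θ, x) (0, Pi.single i 1) (0, Pi.single i 1) (Pi.single j 1, 0) := by
    intro i
    rw [symm3a, symm3b]
  simp only [fun i : Fin p => e2 i, fun i : Fin p => e3 i]
  rw [Finset.mul_sum, ← Finset.sum_add_distrib]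
  refine Finset.sum_congr rfl fun i _ => ?_
  ring



/-- the weighted Stein operator applied to `∇ₓ ∂_{θⱼ} log q_θ` equals
`∂_{θⱼ} H_w(x,θ)` pointwise; hence SMoM with the weighted Stein operator and these test
functions coincides with weighted score matching. -/
theorem stmt18 {d p : ℕ} (Θ : Set (Fin d → ℝ)) (hΘ : IsOpen Θ)
    (q : (Fin d → ℝ) → (Fin p → ℝ) → ℝ)
    (hpos : ∀ θ x, 0 < q θ x)
    (hsmooth : ContDiff ℝ (⊤ : ℕ∞) (fun pr : (Fin d → ℝ) × (Fin p → ℝ) => q pr.1 pr.2))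
    (w : (Fin p → ℝ) → ℝ) (hw : ContDiff ℝ (⊤ : ℕ∞) w) :
    ∀ θ ∈ Θ, ∀ (j : Fin d) (x : Fin p → ℝ),
      steinW (q θ) w (scoreGrad q θ j) x = pdv j (fun θ' => hyvW q w θ' x) θ
      ∧ ∀ (n : ℕ) (X : Fin n → (Fin p → ℝ)),
          (1 / (n : ℝ)) * ∑ i, steinW (q θ) w (scoreGrad q θ j) (X i)
            = (1 / (n : ℝ)) * ∑ i, pdv j (fun θ' => hyvW q w θ' (X i)) θ := by
  
  intro θ _ j x
  refine ⟨aux_main q hpos hsmooth w hw θ j x, fun n X => ?_⟩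
  congr 1
  exact Finset.sum_congr rfl fun i _ => aux_main q hpos hsmooth w hw θ j (X i)
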